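/- The function f(μ₁, μᵢ) = (μ₁ − μᵢ)/D(μᵢ‖μ₁) is monotone in the following sense: on the domain {(μ₁, μᵢ) ∈ (0,1)² : μ₁ > μᵢ}, f is nonincreasing in μ₁ (for fixed μᵢ) and nondecreasing in μᵢ (for fixed μ₁). That is, if μᵢ < μ₁ ≤ μ₁' then f(μ₁', μᵢ) ≤ f(μ₁, μᵢ), and if μᵢ ≤ μᵢ' < μ₁ then f(μ₁, μᵢ) ≤ f(μ₁, μᵢ'). -/

import Mathlib

noncomputable def binKL (a b : ℝ) : ℝ :=
  a * Real.log (a / b) + (1 - a) * Real.log ((1 - a) / (1 - b))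

noncomputable def f (μ1 μi : ℝ) : ℝ := (μ1 - μi) / binKL μi μ1

open Real Set InformationTheory

/-! Both `b ↦ D(a‖b)` and `a ↦ D(a‖b)` are convex, since `D(a‖b) = -binEntropy a - (a log b +
(1 - a) log (1 - b))` and the cross term is concave in `b` and affine in `a`. As `D(a‖a) = 0`,
`1 / f(μ₁, μᵢ) = D(μᵢ‖μ₁) / (μ₁ - μᵢ)` is the slope of a secant of either convex function through
its zero, so it is monotone in the free endpoint. -/

lemma binKL_self (a : ℝ) : binKL a a = 0 := by
  simp [binKL]

lemma mul_log_div_eq (a : ℝ) {b : ℝ} (hb : b ≠ 0) :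
    a * log (a / b) = a * log a - a * log b := by
  rcases eq_or_ne a 0 with rfl | ha
  · simp
  · rw [log_div ha hb, mul_sub]

lemma binKL_eq_klFun {a b : ℝ} (hb₀ : b ≠ 0) (hb₁ : b ≠ 1) :
    binKL a b = b * klFun (a / b) + (1 - b) * klFun ((1 - a) / (1 - b)) := by
  have hb₁' : 1 - b ≠ 0 := sub_ne_zero.2 hb₁.symm
  simp only [binKL, klFun_apply]
  field_simp
  ring

lemma binKL_eq_neg_binEntropy_sub {a b : ℝ} (hb₀ : b ≠ 0) (hb₁ : b ≠ 1) :
    binKL a b = -binEntropy a - (a * log b + (1 - a) * log (1 - b)) := by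
  rw [binKL, mul_log_div_eq a hb₀, mul_log_div_eq (1 - a) (sub_ne_zero.2 hb₁.symm), binEntropy,
    log_inv, log_inv]
  ring

lemma binKL_pos {a b : ℝ} (ha : a ∈ Icc 0 1) (hb : b ∈ Ioo 0 1) (hab : a ≠ b) :
    0 < binKL a b := by
  have h₁ : 0 < klFun (a / b) := by
    refine (klFun_nonneg (div_nonneg ha.1 hb.1.le)).lt_of_ne' ?_
    rw [Ne, klFun_eq_zero_iff (div_nonneg ha.1 hb.1.le), div_eq_one_iff_eq hb.1.ne']
    exact hab
  have h₂ : 0 ≤ klFun ((1 - a) / (1 - b)) :=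
    klFun_nonneg (div_nonneg (sub_nonneg.2 ha.2) (sub_pos.2 hb.2).le)
  rw [binKL_eq_klFun hb.1.ne' hb.2.ne]
  exact add_pos_of_pos_of_nonneg (mul_pos hb.1 h₁) (mul_nonneg (sub_pos.2 hb.2).le h₂)

lemma concaveOn_log_one_sub : ConcaveOn ℝ (Iio 1) fun x => log (1 - x) := by
  let g : ℝ →ᵃ[ℝ] ℝ := AffineMap.const ℝ ℝ (1 : ℝ) - AffineMap.id ℝ ℝ
  have h := strictConcaveOn_log_Ioi.concaveOn.comp_affineMap g
  have hs : g ⁻¹' Ioi 0 = Iio 1 := by ext; simp [g]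
  rw [hs] at h
  exact h.congr fun x _ => by simp [g]

lemma convexOn_binKL_right {a : ℝ} (ha : a ∈ Icc 0 1) : ConvexOn ℝ (Ioo 0 1) (binKL a) := by
  have hconc : ConcaveOn ℝ (Ioo 0 1) fun b => a * log b + (1 - a) * log (1 - b) :=
    (strictConcaveOn_log_Ioi.concaveOn.subset Ioo_subset_Ioi_self (convex_Ioo 0 1)).smul ha.1
      |>.add ((concaveOn_log_one_sub.subset Ioo_subset_Iio_self (convex_Ioo 0 1)).smul
        (sub_nonneg.2 ha.2))
  refine (hconc.neg.add_const (-binEntropy a)).congr fun b hb => ?_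
  simp only [Pi.add_apply, Pi.neg_apply, binKL_eq_neg_binEntropy_sub hb.1.ne' hb.2.ne]
  ring

lemma convexOn_binKL_left {b : ℝ} (hb : b ∈ Ioo 0 1) :
    ConvexOn ℝ (Icc 0 1) fun a => binKL a b := by
  have haff : ConcaveOn ℝ (Icc 0 1) fun a => a * log b + (1 - a) * log (1 - b) := by
    refine ⟨convex_Icc 0 1, fun x _ y _ s t _ _ hst => le_of_eq ?_⟩
    simp only [smul_eq_mul]
    linear_combination (log (1 - b)) * hst
  refine (strictConcave_binEntropy.concaveOn.neg.sub haff).congr fun a _ => ?_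
  simp only [binKL_eq_neg_binEntropy_sub hb.1.ne' hb.2.ne, Pi.sub_apply, Pi.neg_apply]

lemma monotoneOn_binKL_div_sub {a : ℝ} (ha : a ∈ Ioo 0 1) :
    MonotoneOn (fun b => binKL a b / (b - a)) (Ioo a 1) := by
  intro b hb b' hb' hbb'
  have hmem : ∀ {x}, x ∈ Ioo a 1 → x ∈ Ioo (0 : ℝ) 1 := fun hx => ⟨ha.1.trans hx.1, hx.2⟩
  have h := (convexOn_binKL_right (Ioo_subset_Icc_self ha)).secant_mono ha (hmem hb) (hmem hb')
    hb.1.ne' hb'.1.ne' hbb'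
  simpa only [binKL_self, sub_zero] using h

lemma antitoneOn_binKL_div_sub {b : ℝ} (hb : b ∈ Ioo 0 1) :
    AntitoneOn (fun a => binKL a b / (b - a)) (Ico 0 b) := by
  intro a ha a' ha' haa'
  have hmem : ∀ {x}, x ∈ Ico 0 b → x ∈ Icc (0 : ℝ) 1 :=
    fun hx => ⟨hx.1, hx.2.le.trans hb.2.le⟩
  have h := (convexOn_binKL_left hb).secant_mono (Ioo_subset_Icc_self hb) (hmem ha) (hmem ha')
    ha.2.ne ha'.2.ne haa'
  simp only [binKL_self, sub_zero] at h
  rw [← neg_sub b a, ← neg_sub b a', div_neg, div_neg] at h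
  exact neg_le_neg_iff.1 h

lemma f_eq_inv (μ1 μi : ℝ) : f μ1 μi = (binKL μi μ1 / (μ1 - μi))⁻¹ := by
  rw [f, inv_div]

/-- Monotonicity of f on {μ₁ > μᵢ}: nonincreasing in μ₁, nondecreasing in μᵢ. -/
theorem f_monotone :
    (∀ μi μ1 μ1' : ℝ, μi ∈ Set.Ioo (0:ℝ) 1 → μ1 ∈ Set.Ioo (0:ℝ) 1 →
      μ1' ∈ Set.Ioo (0:ℝ) 1 → μi < μ1 → μ1 ≤ μ1' → f μ1' μi ≤ f μ1 μi) ∧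
    (∀ μ1 μi μi' : ℝ, μ1 ∈ Set.Ioo (0:ℝ) 1 → μi ∈ Set.Ioo (0:ℝ) 1 →
      μi' ∈ Set.Ioo (0:ℝ) 1 → μi ≤ μi' → μi' < μ1 → f μ1 μi ≤ f μ1 μi') := by
  constructor
  · intro a b b' ha hb hb' hab hbb'
    have hpos : 0 < binKL a b / (b - a) :=
      div_pos (binKL_pos (Ioo_subset_Icc_self ha) hb hab.ne) (sub_pos.2 hab)
    rw [f_eq_inv, f_eq_inv]
    exact inv_anti₀ hpos
      (monotoneOn_binKL_div_sub ha ⟨hab, hb.2⟩ ⟨hab.trans_le hbb', hb'.2⟩ hbb')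
  · intro b a a' hb ha ha' haa' hab'
    have hpos : 0 < binKL a' b / (b - a') :=
      div_pos (binKL_pos (Ioo_subset_Icc_self ha') hb hab'.ne) (sub_pos.2 hab')
    rw [f_eq_inv, f_eq_inv]
    exact inv_anti₀ hpos
      (antitoneOn_binKL_div_sub hb ⟨ha.1.le, haa'.trans_lt hab'⟩ ⟨ha'.1.le, hab'⟩ haa')
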